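/- arXiv:2603.23360 — 2 statements merged into one kernel-verified Lean document; each statement's English description precedes it below -/
import Mathlib

section
/- Semantic substitution: for any type T with free type variable X, value-type environment ρ, path s, and value type V such that V↓s' = ⟦T'⟧ρ↓s' for all paths s' (for some type T'), the interpretation ⟦T⟧(ρ,(X,V))↓s equals ⟦T[X := T']⟧ρ↓s. -/
/-- Selectors for selection paths. -/
inductive Sel
  | dom | ran
  deriving DecidableEq

/-- A selection path is a finite list of selectors (head is the next projection to resolve). -/
abbrev SelPath := List Sel

/-- SelPath positivity: flipped by `dom`, preserved by `ran`. -/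
def pos : SelPath → Bool
  | [] => true
  | .dom :: s => !(pos s)
  | .ran :: s => pos s

/-- Types of F<:^DR (de Bruijn indices for type variables). -/
inductive Ty
  | base | top | bot
  | tvar : Nat → Ty
  | arrow : Ty → Ty → Ty
  | all : Ty → Ty → Ty        -- bounded quantification: bound, body
  | dom : Ty → Ty
  | range : Ty → Ty
  deriving DecidableEq

/-- Terms of F<:^DR (de Bruijn indices for term variables). -/
inductive Tm
  | cst
  | var : Nat → Tm
  | abs : Tm → Tm
  | app : Tm → Tm → Tm
  | tabs : Tm → Tm
  | tapp : Tm → Ty → Tm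
  deriving DecidableEq

/-- Values: constants, closures, and type-closures. -/
inductive Val
  | cst
  | clos : List Val → Tm → Val
  | tclos : List Val → Tm → Val

/-- Big-step evaluation with environments. -/
inductive Eval : List Val → Tm → Val → Prop
  | cst : Eval H .cst .cst
  | var : H[x]? = some v → Eval H (.var x) v
  | abs : Eval H (.abs t) (.clos H t)
  | tabs : Eval H (.tabs t) (.tclos H t)
  | app : Eval H t₁ (.clos H' t') → Eval H t₂ vx → Eval (vx :: H') t' v →
      Eval H (.app t₁ t₂) v
  | tapp : Eval H t (.tclos H' t') → Eval H' t' v → Eval H (.tapp t T) v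

/-- A value type: a set of (value, selection path) pairs. -/
abbrev VTy := Set (Val × SelPath)

/-- Projection of a value type at a selection path. -/
def proj (V : VTy) (s : SelPath) : Set Val := {v | (v, s) ∈ V}

/-- Sub-value-interpretation relation `≤ₛ`, positivity aware. -/
def vstp (V₁ V₂ : VTy) : Prop :=
  ∀ s : SelPath, (pos s = true → proj V₁ s ⊆ proj V₂ s) ∧
    (pos s = false → proj V₂ s ⊆ proj V₁ s)

/-- Well-formed functionality property. -/
def WFFun (V : VTy) : Prop :=
  ∀ v s, (v, s) ∈ V → ∀ v₁, (v₁, s ++ [Sel.dom]) ∈ V →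
    ∃ H t, v = Val.clos H t ∧
      ∃ v₂, Eval (v₁ :: H) t v₂ ∧ (v₂, s ++ [Sel.ran]) ∈ V

/-- Value interpretation of types, with delayed projections via selection paths. -/
def interp : Ty → List VTy → SelPath → Set Val
  | .base, _, [] => {Val.cst}
  | .base, _, sl :: s => if pos (sl :: s) then Set.univ else ∅
  | .top, _, s => if pos s then Set.univ else ∅
  | .bot, _, s => if pos s then ∅ else Set.univ
  | .tvar X, ρ, s => {v | ∃ V, ρ[X]? = some V ∧ (v, s) ∈ V}
  | .arrow T₁ T₂, ρ, [] =>
      {v | ∃ H t, v = Val.clos H t ∧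
        ∀ v₁ ∈ interp T₁ ρ [], ∃ v₂, Eval (v₁ :: H) t v₂ ∧ v₂ ∈ interp T₂ ρ []}
  | .arrow T₁ _, ρ, .dom :: s => interp T₁ ρ s
  | .arrow _ T₂, ρ, .ran :: s => interp T₂ ρ s
  | .dom T, ρ, s => interp T ρ (.dom :: s)
  | .range T, ρ, s => interp T ρ (.ran :: s)
  | .all U T, ρ, [] =>
      {v | ∃ H t, v = Val.tclos H t ∧
        ∀ V : VTy, WFFun V → vstp V {p | p.1 ∈ interp U ρ p.2} →
          ∃ v', Eval H t v' ∧ v' ∈ interp T (V :: ρ) []}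
  | .all _ _, _, sl :: s => if pos (sl :: s) then Set.univ else ∅

/-- Interpretation of a type as a value type (all paths at once). -/
def interpV (ρ : List VTy) (T : Ty) : VTy := {p | p.1 ∈ interp T ρ p.2}

/-- Shifting of type variables `≥ c` by `d`. -/
def shiftTy (d : Nat) : Ty → Nat → Ty
  | .base, _ => .base
  | .top, _ => .top
  | .bot, _ => .bot
  | .tvar X, c => if c ≤ X then .tvar (X + d) else .tvar X
  | .arrow a b, c => .arrow (shiftTy d a c) (shiftTy d b c)
  | .all u t, c => .all (shiftTy d u c) (shiftTy d t (c + 1))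
  | .dom t, c => .dom (shiftTy d t c)
  | .range t, c => .range (shiftTy d t c)

/-- Capture-avoiding substitution of `U` for type variable `k`. -/
def substTy (U : Ty) : Ty → Nat → Ty
  | .base, _ => .base
  | .top, _ => .top
  | .bot, _ => .bot
  | .tvar X, k => if X = k then shiftTy k U 0
      else if k < X then .tvar (X - 1) else .tvar X
  | .arrow a b, k => .arrow (substTy U a k) (substTy U b k)
  | .all u t, k => .all (substTy U u k) (substTy U t (k + 1))
  | .dom t, k => .dom (substTy U t k)
  | .range t, k => .range (substTy U t k)

/-- Subtyping of F<:^DR. `Δ` records bounds of type variables. -/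
inductive Stp : List Ty → Ty → Ty → Prop
  | top : Stp Δ T .top
  | bot : Stp Δ .bot T
  | refl : Stp Δ T T
  | trans : Stp Δ T₁ T₂ → Stp Δ T₂ T₃ → Stp Δ T₁ T₃
  | tvar : Δ[X]? = some U → Stp Δ (.tvar X) (shiftTy (X + 1) U 0)
  | arrow : Stp Δ T₁ S₁ → Stp Δ S₂ T₂ → Stp Δ (.arrow S₁ S₂) (.arrow T₁ T₂)
  | all : Stp (U :: Δ) S T → Stp Δ (.all U S) (.all U T)
  | domIntro : Stp Δ T₁ (.dom (.arrow T₁ T₂))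
  | domElim : Stp Δ (.dom (.arrow T₁ T₂)) T₁
  | ranIntro : Stp Δ T₂ (.range (.arrow T₁ T₂))
  | ranElim : Stp Δ (.range (.arrow T₁ T₂)) T₂
  | domCongr : Stp Δ T S → Stp Δ (.dom S) (.dom T)
  | ranCongr : Stp Δ S T → Stp Δ (.range S) (.range T)

/-- Typing of F<:^DR, with the domain/range application rule `appDR` in place of
    the standard application rule. -/
inductive HasType : List Ty → List Ty → Tm → Ty → Prop
  | cst : HasType Δ Γ .cst .base
  | var : Γ[x]? = some T → HasType Δ Γ (.var x) T
  | sub : HasType Δ Γ t T₁ → Stp Δ T₁ T₂ → HasType Δ Γ t T₂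
  | abs : HasType Δ (T₁ :: Γ) t T₂ → HasType Δ Γ (.abs t) (.arrow T₁ T₂)
  | appDR : HasType Δ Γ f F → HasType Δ Γ t (.dom F) →
      HasType Δ Γ (.app f t) (.range F)
  | tabs : HasType (U :: Δ) Γ t T → HasType Δ Γ (.tabs t) (.all U T)
  | tapp : Stp Δ S U → HasType Δ Γ f (.all U T) →
      HasType Δ Γ (.tapp f S) (substTy S T 0)

/-- Environment interpretation: `(H, ρ)` well-interprets `(Δ, Γ)`. -/
def EnvOK (Δ Γ : List Ty) (H : List Val) (ρ : List VTy) : Prop :=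
  H.length = Γ.length ∧ ρ.length = Δ.length ∧
  (∀ (x : Nat) T, Γ[x]? = some T → ∃ v, H[x]? = some v ∧ v ∈ interp T ρ []) ∧
  (∀ (X : Nat) U, Δ[X]? = some U → ∃ V, ρ[X]? = some V ∧ WFFun V ∧
    vstp V (interpV ρ U))

/-- Semantic typing. -/
def SemType (Δ Γ : List Ty) (t : Tm) (T : Ty) : Prop :=
  ∀ H ρ, EnvOK Δ Γ H ρ → ∃ v, Eval H t v ∧ v ∈ interp T ρ []

/-- Semantic subtyping. -/
def SemStp (Δ Γ : List Ty) (T₁ T₂ : Ty) : Prop :=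
  ∀ H ρ, EnvOK Δ Γ H ρ → vstp (interpV ρ T₁) (interpV ρ T₂)

/-!
Substitution commutes with the interpretation because `interp` only ever looks up a type
variable in the environment. Shifting by `d` at cutoff `c` corresponds to inserting `d`
environment entries at position `c`, and substituting `T'` at index `k` corresponds to
inserting at position `k` a value type that agrees with `⟦T'⟧` at every path. The inductions
on the type generalise over the environment prefix, because the binder of `∀` extends the
environment at the front.
-/

theorem interp_tvar_congr {X Y : Nat} {ρ ρ' : List VTy} (h : ρ[X]? = ρ'[Y]?)
    (s : SelPath) : interp (.tvar X) ρ s = interp (.tvar Y) ρ' s := by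
  simp only [interp, h]

theorem interp_tvar_of_getElem?_eq_some {X : Nat} {ρ : List VTy} {V : VTy}
    (h : ρ[X]? = some V) (s : SelPath) : interp (.tvar X) ρ s = proj V s := by
  simp [interp, proj, h]

theorem interp_shiftTy_append (T : Ty) (ρ₁ ρ' ρ₂ : List VTy) (s : SelPath) :
    interp (shiftTy ρ'.length T ρ₁.length) (ρ₁ ++ ρ' ++ ρ₂) s = interp T (ρ₁ ++ ρ₂) s := by
  induction T generalizing ρ₁ s with
  | base => cases s <;> rfl
  | top | bot => rfl
  | tvar X =>
    simp only [shiftTy]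
    split_ifs with h
    · apply interp_tvar_congr
      rw [List.getElem?_append_right (by simp only [List.length_append]; omega),
        List.getElem?_append_right h]
      congr 1; simp only [List.length_append]; omega
    · apply interp_tvar_congr
      rw [List.getElem?_append_left (by simp only [List.length_append]; omega),
        List.getElem?_append_left (by omega), List.getElem?_append_left (by omega)]
  | arrow T₁ T₂ ih₁ ih₂ =>
    rcases s with _ | ⟨_ | _, s⟩ <;> simp only [shiftTy, interp, ih₁, ih₂]
  | all U T ihU ihT =>
    rcases s with _ | ⟨_, s⟩
    · have hT (W : VTy) := ihT (W :: ρ₁) []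
      simp only [List.length_cons, List.cons_append] at hT
      simp only [shiftTy, interp, ihU, hT]
    · rfl
  | dom T ih | range T ih => simp only [shiftTy, interp, ih]

theorem interp_substTy_append (T T' : Ty) {ρ₂ : List VTy} {V : VTy}
    (hV : ∀ s, proj V s = interp T' ρ₂ s) (ρ₁ : List VTy) (s : SelPath) :
    interp T (ρ₁ ++ V :: ρ₂) s = interp (substTy T' T ρ₁.length) (ρ₁ ++ ρ₂) s := by
  induction T generalizing ρ₁ s with
  | base => cases s <;> rfl
  | top | bot => rfl
  | tvar X =>
    simp only [substTy]
    split_ifs with hX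
    · subst hX
      rw [interp_tvar_of_getElem?_eq_some (V := V) (by simp) s, hV s]
      simpa using (interp_shiftTy_append T' [] ρ₁ ρ₂ s).symm
    · apply interp_tvar_congr
      rw [List.getElem?_append_right (by omega), List.getElem?_append_right (by omega)]
      obtain ⟨k, rfl⟩ : ∃ k, X = ρ₁.length + k + 1 := ⟨X - ρ₁.length - 1, by omega⟩
      simp [show ρ₁.length + k + 1 - ρ₁.length = k + 1 by omega]
    · apply interp_tvar_congr
      rw [List.getElem?_append_left (by omega), List.getElem?_append_left (by omega)]
  | arrow T₁ T₂ ih₁ ih₂ =>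
    rcases s with _ | ⟨_ | _, s⟩ <;> simp only [substTy, interp, ih₁, ih₂]
  | all U T ihU ihT =>
    rcases s with _ | ⟨_, s⟩
    · have hT (W : VTy) := ihT (W :: ρ₁) []
      simp only [List.length_cons, List.cons_append] at hT
      simp only [substTy, interp, ihU, hT]
    · rfl
  | dom T ih | range T ih => simp only [substTy, interp, ih]

/-- semantic substitution.  If `V` agrees with the interpretation of
`T'` at every path, then interpreting `T` with `V` bound for the type variable
`X = 0` coincides with interpreting `T[X := T']`. -/
theorem semantic_substitution (T T' : Ty) (ρ : List VTy) (s : SelPath) (V : VTy)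
    (hV : ∀ s' : SelPath, proj V s' = interp T' ρ s') :
    interp T (V :: ρ) s = interp (substTy T' T 0) ρ s :=
  interp_substTy_append T T' hV [] s
end

section
/- Semantic functionality: if (H, ρ) is a well-interpreted environment for context Γ, then for every type T, the value interpretation ⟦T⟧ρ satisfies the well-formed functionality property WFFun. -/
/-!
Induct on `T`, generalising over the selection path `s`. Appending `dom` flips the polarity of
a path, while `⊤`, `⊥`, base types and quantified types contain, at every nonempty path, either
everything or nothing according to its polarity; so they never contain a value at `s` together
with one at `s ++ [dom]`. At the empty path an arrow type is functional by definition, at a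
nonempty path (and for `dom T`, `range T`) the first selector hands the question to a component
type, and type variables inherit the property from the environment.
-/

theorem pos_append_dom (s : SelPath) : pos (s ++ [.dom]) = !pos s := by
  induction s with
  | nil => rfl
  | cons a s ih => cases a <;> simp [pos, ih]

section interp

variable {ρ : List VTy} {s : SelPath} {v v₁ : Val}

theorem not_mem_interp_top_append_dom (hv : v ∈ interp .top ρ s) :
    v₁ ∉ interp .top ρ (s ++ [.dom]) := by
  by_cases h : pos s <;> simp_all [interp, pos_append_dom]

theorem not_mem_interp_bot_append_dom (hv : v ∈ interp .bot ρ s) :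
    v₁ ∉ interp .bot ρ (s ++ [.dom]) := by
  by_cases h : pos s <;> simp_all [interp, pos_append_dom]

theorem interp_base_subset_top : interp .base ρ s ⊆ interp .top ρ s := by
  cases s <;> simp [interp, pos]

theorem interp_all_subset_top {U T : Ty} : interp (.all U T) ρ s ⊆ interp .top ρ s := by
  cases s <;> simp [interp, pos]

end interp

theorem interp_functional {ρ : List VTy} (hρ : ∀ V ∈ ρ, WFFun V) (T : Ty) (s : SelPath)
    {v v₁ : Val}
    (hv : v ∈ interp T ρ s) (hv₁ : v₁ ∈ interp T ρ (s ++ [.dom])) :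
    ∃ H t, v = .clos H t ∧ ∃ v₂, Eval (v₁ :: H) t v₂ ∧ v₂ ∈ interp T ρ (s ++ [.ran]) := by
  induction T generalizing s with
  | base =>
    exact (not_mem_interp_top_append_dom (interp_base_subset_top hv)
      (interp_base_subset_top hv₁)).elim
  | top => exact (not_mem_interp_top_append_dom hv hv₁).elim
  | bot => exact (not_mem_interp_bot_append_dom hv hv₁).elim
  | all U T _ _ =>
    exact (not_mem_interp_top_append_dom (interp_all_subset_top hv)
      (interp_all_subset_top hv₁)).elim
  | tvar X =>
    obtain ⟨V, hV, hvV⟩ := hv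
    obtain ⟨V', hV', hv₁V⟩ := hv₁
    obtain rfl : V = V' := Option.some.inj (hV.symm.trans hV')
    obtain ⟨H, t, rfl, v₂, heval, hv₂⟩ := hρ V (List.mem_of_getElem? hV) v s hvV v₁ hv₁V
    exact ⟨H, t, rfl, v₂, heval, V, hV, hv₂⟩
  | arrow T₁ T₂ ih₁ ih₂ =>
    match s with
    | [] =>
      obtain ⟨H, t, rfl, hfun⟩ := hv
      exact ⟨H, t, rfl, hfun v₁ hv₁⟩
    | .dom :: s => exact ih₁ s hv hv₁
    | .ran :: s => exact ih₂ s hv hv₁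
  | dom T ih => exact ih (.dom :: s) hv hv₁
  | range T ih => exact ih (.ran :: s) hv hv₁

theorem wfFun_interpV {ρ : List VTy} (hρ : ∀ V ∈ ρ, WFFun V) (T : Ty) :
    WFFun (interpV ρ T) :=
  fun _ s hv _ hv₁ => interp_functional hρ T s hv hv₁

theorem EnvOK.wfFun_of_mem {Δ Γ : List Ty} {H : List Val} {ρ : List VTy}
    (hEnv : EnvOK Δ Γ H ρ) {V : VTy} (hV : V ∈ ρ) : WFFun V := by
  obtain ⟨X, hX⟩ := List.mem_iff_getElem?.mp hV
  have hXΔ : X < Δ.length := hEnv.2.1 ▸ (List.getElem?_eq_some_iff.mp hX).1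
  obtain ⟨V', hV', hWF, -⟩ := hEnv.2.2.2 X Δ[X] (List.getElem?_eq_getElem hXΔ)
  obtain rfl : V = V' := Option.some.inj (hX.symm.trans hV')
  exact hWF

/-- semantic functionality: under a well-interpreted environment,
every value interpretation satisfies well-formed functionality. -/
theorem semantic_functionality (Δ Γ : List Ty) (H : List Val) (ρ : List VTy)
    (hEnv : EnvOK Δ Γ H ρ) :
    ∀ T : Ty, WFFun (interpV ρ T) :=
  wfFun_interpV fun _ => hEnv.wfFun_of_mem
end
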